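/- Let D ≥ 3 be an integer and set c = D(D−1)/(D−2). For each integer n ≥ 1 define C_n : ℝ³ → ℝ by C_n(x,y,z) = x^n − Σ_{p=1}^{⌊n/2⌋} (2p−1)·binom(n,2p)·c^{2p}·x^{n−2p}·(4y)^p − Σ_{p=1}^{⌊(n−1)/2⌋} 16p·binom(n,2p+1)·c^{2p+1}·x^{n−2p−1}·(4y)^{p−1}·z. Then for every integer n ≥ 1 and all real s, g: C_n(s, g², g³) = Σ_{p=0}^n (−2^p·(p−1)·binom(n,p)·c^p) · g^p · s^{n−p}. -/

import Mathlib

/-- The order-`n` Cosmological Gravity density `C^{(n)}` of dimension `D`, regarded as a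
polynomial in the invariants `R → x`, `4·K₂ → 4y` (via `K₂ → y`), `K₃ → z`. -/
noncomputable def cosmoC (D n : ℕ) (x y z : ℝ) : ℝ :=
  x ^ n
    - ∑ p ∈ Finset.Icc 1 (n / 2),
        (2 * (p : ℝ) - 1) * (n.choose (2 * p) : ℝ) *
          ((D : ℝ) * ((D : ℝ) - 1) / ((D : ℝ) - 2)) ^ (2 * p) * x ^ (n - 2 * p) * (4 * y) ^ p
    - ∑ p ∈ Finset.Icc 1 ((n - 1) / 2),
        16 * (p : ℝ) * (n.choose (2 * p + 1) : ℝ) *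
          ((D : ℝ) * ((D : ℝ) - 1) / ((D : ℝ) - 2)) ^ (2 * p + 1) * x ^ (n - 2 * p - 1) *
          (4 * y) ^ (p - 1) * z

/-!
Split the sum over `p` by parity. An even index `p = 2q` contributes `(4g²)^q` times the
`q`-th term of the first sum of `C_n` (the `p = 0` term being `sⁿ`); an odd index
`p = 2q + 1` contributes `(4g²)^(q-1) g³` times the `q`-th term of the second sum, and
`p = 1` drops out because of the factor `p - 1`.
-/

open Finset

theorem Finset.sum_range_succ_eq_sum_even_add_sum_odd {M : Type*} [AddCommMonoid M]
    (f : ℕ → M) (n : ℕ) :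
    ∑ p ∈ range (n + 1), f p
      = ∑ q ∈ range (n / 2 + 1), f (2 * q) + ∑ q ∈ range ((n + 1) / 2), f (2 * q + 1) := by
  have hdisj : Disjoint ((range (n / 2 + 1)).image (2 * ·))
      ((range ((n + 1) / 2)).image (2 * · + 1)) := by
    simp only [disjoint_left, mem_image]
    omega
  rw [← sum_image (g := (2 * ·)) (by simp), ← sum_image (g := (2 * · + 1)) (by simp),
    ← sum_union hdisj]
  congr 1
  ext p
  simp only [mem_range, mem_union, mem_image]
  constructor
  · intro hp
    obtain ⟨k, rfl | rfl⟩ := Nat.even_or_odd' p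
    · exact Or.inl ⟨k, by omega, rfl⟩
    · exact Or.inr ⟨k, by omega, rfl⟩
  · rintro (⟨k, hk, rfl⟩ | ⟨k, hk, rfl⟩) <;> omega

theorem Finset.sum_range_succ_eq_add_sum_Icc {M : Type*} [AddCommMonoid M] (f : ℕ → M) (m : ℕ) :
    ∑ q ∈ range (m + 1), f q = f 0 + ∑ q ∈ Icc 1 m, f q := by
  rw [sum_range_eq_add_Ico f (by omega : 0 < m + 1), Ico_add_one_right_eq_Icc]

theorem cosmoC_body_eq_sum_range {R : Type*} [CommRing R] (c s g : R) (n : ℕ) :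
    s ^ n
      - ∑ p ∈ Icc 1 (n / 2), (2 * (p : R) - 1) * (n.choose (2 * p) : R) * c ^ (2 * p) *
          s ^ (n - 2 * p) * (4 * g ^ 2) ^ p
      - ∑ p ∈ Icc 1 ((n - 1) / 2), 16 * (p : R) * (n.choose (2 * p + 1) : R) * c ^ (2 * p + 1) *
          s ^ (n - 2 * p - 1) * (4 * g ^ 2) ^ (p - 1) * g ^ 3
      = ∑ p ∈ range (n + 1),
          (-(2 : R) ^ p * ((p : R) - 1) * (n.choose p : R) * c ^ p) * g ^ p * s ^ (n - p) := by
  obtain rfl | hn := n.eq_zero_or_pos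
  · simp
  rw [sum_range_succ_eq_sum_even_add_sum_odd, show (n + 1) / 2 = (n - 1) / 2 + 1 by omega,
    sum_range_succ_eq_add_sum_Icc, sum_range_succ_eq_add_sum_Icc]
  have heven : ∀ q ∈ Icc 1 (n / 2),
      -2 ^ (2 * q) * ((2 * q : ℕ) - 1 : R) * n.choose (2 * q) * c ^ (2 * q) * g ^ (2 * q) *
          s ^ (n - 2 * q)
        = -((2 * q - 1) * n.choose (2 * q) * c ^ (2 * q) * s ^ (n - 2 * q) * (4 * g ^ 2) ^ q) := by
    intro q _
    rw [pow_mul, pow_mul, mul_pow]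
    push_cast
    ring
  have hodd : ∀ q ∈ Icc 1 ((n - 1) / 2),
      -2 ^ (2 * q + 1) * ((2 * q + 1 : ℕ) - 1 : R) * n.choose (2 * q + 1) * c ^ (2 * q + 1) *
          g ^ (2 * q + 1) * s ^ (n - (2 * q + 1))
        = -(16 * q * n.choose (2 * q + 1) * c ^ (2 * q + 1) * s ^ (n - 2 * q - 1) *
            (4 * g ^ 2) ^ (q - 1) * g ^ 3) := by
    intro q hq
    obtain ⟨k, rfl⟩ : ∃ k, q = k + 1 := ⟨q - 1, by simp at hq; omega⟩
    rw [Nat.add_sub_cancel, Nat.sub_sub, pow_add, pow_add, pow_mul, pow_mul, mul_pow]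
    push_cast
    ring
  rw [sum_congr rfl heven, sum_congr rfl hodd, sum_neg_distrib, sum_neg_distrib]
  norm_num
  ring

theorem stmt_4_general (D : ℕ) :
    ∀ n : ℕ, 1 ≤ n → ∀ s g : ℝ,
      cosmoC D n s (g ^ 2) (g ^ 3)
        = ∑ p ∈ Finset.range (n + 1),
            (-(2 : ℝ) ^ p * ((p : ℝ) - 1) * (n.choose p : ℝ) *
              ((D : ℝ) * ((D : ℝ) - 1) / ((D : ℝ) - 2)) ^ p) * g ^ p * s ^ (n - p) := by
  intro n _ s g
  exact cosmoC_body_eq_sum_range _ s g n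

theorem stmt_4 (D : ℕ) (hD : 3 ≤ D) :
    ∀ n : ℕ, 1 ≤ n → ∀ s g : ℝ,
      cosmoC D n s (g ^ 2) (g ^ 3)
        = ∑ p ∈ Finset.range (n + 1),
            (-(2 : ℝ) ^ p * ((p : ℝ) - 1) * (n.choose p : ℝ) *
              ((D : ℝ) * ((D : ℝ) - 1) / ((D : ℝ) - 2)) ^ p) * g ^ p * s ^ (n - p) :=
  stmt_4_general D
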